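/- For the six-qubit octahedron state |Ψ₆⟩ = (|S_{6,1}⟩ + |S_{6,5}⟩)/√2, the maximal overlap with symmetric product states is max_σ |⟨Ψ₆|σ^{⊗6}⟩|² = 2/9, so E_G(|Ψ₆⟩) = log₂(9/2). -/

import Mathlib

open Finset

noncomputable def overlap {n : ℕ} (f g : (Fin n → Fin 2) → ℂ) : ℂ :=
  ∑ x : Fin n → Fin 2, (starRingEnd ℂ) (f x) * g x

noncomputable def symmPow (n : ℕ) (σ : Fin 2 → ℂ) : (Fin n → Fin 2) → ℂ :=
  fun x => ∏ i, σ (x i)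

noncomputable def prodState {n : ℕ} (σ : Fin n → Fin 2 → ℂ) : (Fin n → Fin 2) → ℂ :=
  fun x => ∏ j, σ j (x j)

def qubitUnit (σ : Fin 2 → ℂ) : Prop :=
  ‖σ 0‖ ^ 2 + ‖σ 1‖ ^ 2 = 1

noncomputable def dicke (n k : ℕ) : (Fin n → Fin 2) → ℂ :=
  fun x => if (∑ i, ((x i : ℕ))) = k then ((1 / Real.sqrt (n.choose k) : ℝ) : ℂ) else 0

noncomputable def bloch (θ ph : ℝ) : Fin 2 → ℂ :=
  fun i => if i = 0 then ((Real.cos (θ/2) : ℝ) : ℂ)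
           else Complex.exp (Complex.I * ph) * ((Real.sin (θ/2) : ℝ) : ℂ)

def isCPP (n : ℕ) (ψ : (Fin n → Fin 2) → ℂ) (σ : Fin 2 → ℂ) : Prop :=
  qubitUnit σ ∧ ∀ τ, qubitUnit τ →
    ‖overlap (symmPow n τ) ψ‖ ≤ ‖overlap (symmPow n σ) ψ‖

noncomputable def octahedronState : (Fin 6 → Fin 2) → ℂ :=
  fun x => ((1 / Real.sqrt 2 : ℝ) : ℂ) * (dicke 6 1 x + dicke 6 5 x)

/-!
Expanding a symmetric product state in the computational basis, only the strings of Hamming weight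
`k` meet the Dicke state `|S_{n,k}⟩`, and there are `n.choose k` of them; hence
`⟨Ψ₆|σ^{⊗6}⟩ = √3 (σ̄₀⁵ σ̄₁ + σ̄₀ σ̄₁⁵)`. With `a = |σ₀|`, `b = |σ₁|`, `a² + b² = 1` and `p = (ab)²`,
the triangle inequality bounds the squared overlap by `3 p (1 - 2p)²`, whose maximum over
`p ≤ 1/4` is `2/9`, attained at `p = 1/6` by a real state.
-/

open ComplexConjugate

theorem sum_pi_fin_succ_eq_sum_cons {α M : Type*} [Fintype α] [AddCommMonoid M] {n : ℕ}
    (F : (Fin (n + 1) → α) → M) :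
    ∑ x, F x = ∑ i : α, ∑ y : Fin n → α, F (Fin.cons i y) := by
  rw [← (Fin.consEquiv fun _ => α).sum_comp F, Fintype.sum_prod_type]
  rfl

theorem sum_prod_of_weight_eq {R : Type*} [CommSemiring R] (g : Fin 2 → R) (n k : ℕ) :
    ∑ x : Fin n → Fin 2, (if ∑ i, (x i : ℕ) = k then ∏ i, g (x i) else 0)
      = n.choose k * g 0 ^ (n - k) * g 1 ^ k := by
  induction n generalizing k with
  | zero => cases k <;> simp
  | succ n ih =>
    have hsplit : ∀ k, ∑ x : Fin (n + 1) → Fin 2,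
        (if ∑ i, (x i : ℕ) = k then ∏ i, g (x i) else 0)
          = g 0 * ∑ y : Fin n → Fin 2, (if ∑ i, (y i : ℕ) = k then ∏ i, g (y i) else 0)
            + g 1 * ∑ y : Fin n → Fin 2,
                (if 1 + ∑ i, (y i : ℕ) = k then ∏ i, g (y i) else 0) := by
      intro k
      rw [sum_pi_fin_succ_eq_sum_cons, Fin.sum_univ_two]
      simp only [Fin.sum_univ_succ, Fin.prod_univ_succ, Fin.cons_zero, Fin.cons_succ,
        Fin.val_zero, Fin.val_one, zero_add, mul_sum, mul_ite, mul_zero]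
    cases k with
    | zero =>
      rw [hsplit]
      simp only [add_comm 1, Nat.add_one_ne_zero, if_false, sum_const_zero, mul_zero, add_zero, ih]
      simp [pow_succ']
    | succ k =>
      simp only [hsplit, add_comm 1, Nat.add_right_cancel_iff, ih, Nat.choose_succ_succ',
        Nat.add_sub_add_right]
      rcases lt_or_ge n (k + 1) with hn | hn
      · rw [Nat.choose_eq_zero_of_lt hn, Nat.sub_eq_zero_of_le hn.le,
          Nat.sub_eq_zero_of_le (by omega : n ≤ k)]
        push_cast; ring
      · rw [show n - k = n - (k + 1) + 1 by omega]
        push_cast; ring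

theorem overlap_symmPow_dicke (n k : ℕ) (σ : Fin 2 → ℂ) :
    overlap (symmPow n σ) (dicke n k)
      = (√(n.choose k : ℝ) : ℂ) * conj (σ 0) ^ (n - k) * conj (σ 1) ^ k := by
  have hterm : ∀ x : Fin n → Fin 2, conj (symmPow n σ x) * dicke n k x
      = ((1 / √(n.choose k : ℝ) : ℝ) : ℂ) *
          if ∑ i, (x i : ℕ) = k then ∏ i, conj (σ (x i)) else 0 := by
    intro x
    simp only [symmPow, dicke, map_prod]
    split_ifs <;> ring
  have hroot : ((1 / √(n.choose k : ℝ) : ℝ) : ℂ) * (n.choose k : ℂ) = (√(n.choose k : ℝ) : ℂ) := by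
    rw [← Complex.ofReal_natCast, ← Complex.ofReal_mul, one_div_mul_eq_div, Real.div_sqrt]
  rw [overlap, sum_congr rfl fun x _ => hterm x, ← mul_sum,
    sum_prod_of_weight_eq (fun i => conj (σ i))]
  linear_combination (conj (σ 0) ^ (n - k) * conj (σ 1) ^ k) * hroot

theorem overlap_symmPow_octahedronState (σ : Fin 2 → ℂ) :
    overlap (symmPow 6 σ) octahedronState
      = (√3 : ℂ) * (conj (σ 0) ^ 5 * conj (σ 1) + conj (σ 0) * conj (σ 1) ^ 5) := by
  have hlin : overlap (symmPow 6 σ) octahedronState = ((1 / √2 : ℝ) : ℂ) *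
      (overlap (symmPow 6 σ) (dicke 6 1) + overlap (symmPow 6 σ) (dicke 6 5)) := by
    simp only [overlap, octahedronState, mul_add, mul_sum, ← sum_add_distrib]
    exact sum_congr rfl fun x _ => by ring
  have hroot : 1 / √2 * √6 = √3 := by
    rw [show (6 : ℝ) = 2 * 3 by norm_num, Real.sqrt_mul zero_le_two, ← mul_assoc,
      one_div_mul_cancel (by positivity), one_mul]
  have hchoose : ((Nat.choose 6 1 : ℕ) : ℝ) = 6 ∧ ((Nat.choose 6 5 : ℕ) : ℝ) = 6 := by
    norm_num [Nat.choose]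
  rw [hlin, overlap_symmPow_dicke, overlap_symmPow_dicke, hchoose.1, hchoose.2, ← hroot]
  push_cast
  ring

theorem pow_five_mul_add_mul_pow_five {R : Type*} [CommRing R] {a b : R} (h : a ^ 2 + b ^ 2 = 1) :
    a ^ 5 * b + a * b ^ 5 = a * b * (1 - 2 * (a * b) ^ 2) := by
  linear_combination a * b * (a ^ 2 + b ^ 2 + 1) * h

theorem three_mul_mul_one_sub_two_mul_sq_le {p : ℝ} (hp : p ≤ 2 / 3) :
    3 * p * (1 - 2 * p) ^ 2 ≤ 2 / 9 := by
  -- `2/9 - 3 p (1 - 2p)² = 12 (p - 1/6)² (2/3 - p)`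
  nlinarith [mul_nonneg (sq_nonneg (p - 1 / 6)) (sub_nonneg.mpr hp)]

theorem norm_overlap_symmPow_octahedronState_sq_le (σ : Fin 2 → ℂ) (hσ : qubitUnit σ) :
    ‖overlap (symmPow 6 σ) octahedronState‖ ^ 2 ≤ 2 / 9 := by
  set a := ‖σ 0‖
  set b := ‖σ 1‖
  have hab : a ^ 2 + b ^ 2 = 1 := hσ
  have hnorm : ‖overlap (symmPow 6 σ) octahedronState‖ ≤ √3 * (a ^ 5 * b + a * b ^ 5) := by
    rw [overlap_symmPow_octahedronState, norm_mul, Complex.norm_real, Real.norm_of_nonneg (by positivity)]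
    gcongr
    refine (norm_add_le _ _).trans_eq ?_
    simp only [norm_mul, norm_pow, Complex.norm_conj, a, b]
  have hp : (a * b) ^ 2 ≤ 2 / 3 := by nlinarith [sq_nonneg (a ^ 2 - b ^ 2)]
  calc ‖overlap (symmPow 6 σ) octahedronState‖ ^ 2
      ≤ (√3 * (a ^ 5 * b + a * b ^ 5)) ^ 2 := by gcongr
    _ = 3 * (a * b) ^ 2 * (1 - 2 * (a * b) ^ 2) ^ 2 := by
      rw [pow_five_mul_add_mul_pow_five hab, mul_pow, Real.sq_sqrt zero_le_three]; ring
    _ ≤ 2 / 9 := three_mul_mul_one_sub_two_mul_sq_le hp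

theorem norm_overlap_symmPow_octahedronState_real_sq (a b : ℝ) (hab : a ^ 2 + b ^ 2 = 1) :
    ‖overlap (symmPow 6 ![(a : ℂ), (b : ℂ)]) octahedronState‖ ^ 2
      = 3 * (a * b) ^ 2 * (1 - 2 * (a * b) ^ 2) ^ 2 := by
  have hreal : overlap (symmPow 6 ![(a : ℂ), (b : ℂ)]) octahedronState
      = ((√3 * (a * b * (1 - 2 * (a * b) ^ 2)) : ℝ) : ℂ) := by
    rw [overlap_symmPow_octahedronState, ← pow_five_mul_add_mul_pow_five hab]
    simp only [Matrix.cons_val_zero, Matrix.cons_val_one, Complex.conj_ofReal]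
    push_cast
    ring
  rw [hreal, Complex.norm_real, Real.norm_eq_abs, sq_abs, mul_pow, Real.sq_sqrt zero_le_three]
  ring

theorem exists_qubitUnit_norm_overlap_symmPow_octahedronState_sq_eq :
    ∃ σ : Fin 2 → ℂ, qubitUnit σ ∧ ‖overlap (symmPow 6 σ) octahedronState‖ ^ 2 = 2 / 9 := by
  have h3 : √3 ^ 2 = 3 := Real.sq_sqrt zero_le_three
  have h3le : √3 ≤ 3 := by nlinarith [Real.sqrt_nonneg 3]
  set a := √((3 + √3) / 6)
  set b := √((3 - √3) / 6)
  have ha : a ^ 2 = (3 + √3) / 6 := Real.sq_sqrt (by positivity)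
  have hb : b ^ 2 = (3 - √3) / 6 := Real.sq_sqrt (by linarith)
  have hab : a ^ 2 + b ^ 2 = 1 := by rw [ha, hb]; ring
  have hp : (a * b) ^ 2 = 1 / 6 := by rw [mul_pow, ha, hb]; linear_combination (-1 / 36 : ℝ) * h3
  refine ⟨![(a : ℂ), (b : ℂ)], ?_, ?_⟩
  · simpa [qubitUnit] using hab
  · rw [norm_overlap_symmPow_octahedronState_real_sq a b hab, hp]
    norm_num

theorem octahedron_state_geometric_measure :
    (∀ σ : Fin 2 → ℂ, qubitUnit σ →
      ‖overlap (symmPow 6 σ) octahedronState‖ ^ 2 ≤ 2 / 9) ∧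
    (∃ σ : Fin 2 → ℂ, qubitUnit σ ∧
      ‖overlap (symmPow 6 σ) octahedronState‖ ^ 2 = 2 / 9) ∧
    - Real.logb 2 (sSup {a : ℝ | ∃ σ : Fin 2 → ℂ, qubitUnit σ ∧
        a = ‖overlap (symmPow 6 σ) octahedronState‖ ^ 2})
      = Real.logb 2 (9 / 2) := by
  obtain ⟨σ, hσ, hmax⟩ := exists_qubitUnit_norm_overlap_symmPow_octahedronState_sq_eq
  have hgreatest : IsGreatest {a : ℝ | ∃ σ : Fin 2 → ℂ, qubitUnit σ ∧
      a = ‖overlap (symmPow 6 σ) octahedronState‖ ^ 2} (2 / 9) := by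
    refine ⟨⟨σ, hσ, hmax.symm⟩, ?_⟩
    rintro _ ⟨τ, hτ, rfl⟩
    exact norm_overlap_symmPow_octahedronState_sq_le τ hτ
  refine ⟨norm_overlap_symmPow_octahedronState_sq_le, ⟨σ, hσ, hmax⟩, ?_⟩
  rw [hgreatest.csSup_eq, show (2 / 9 : ℝ) = (9 / 2)⁻¹ by norm_num, Real.logb_inv, neg_neg]
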